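/- Let ρ : ℤ → ℝ satisfy |ρ(k)| ≤ 1 for all k ∈ ℤ, and let N, n be integers with 1 ≤ N ≤ n. Set ρ_n(k) := |ρ(k)|·1_{|k|<n} and 1_n(k) := 1_{|k|<n}. Then (1/n)·‖ρ_n ∗ 1_n‖_{ℓ²(ℤ)} ≤ 2·(Σ_{N ≤ |k| < n} ρ(k)²)^{1/2} + 2·(2N+1)·n^{−1/2}. -/

import Mathlib

/-!
Split `ρ_n` into its parts on `N ≤ |k| < n` and on `|k| < N`. Young's inequality
`‖f ∗ g‖₂ ≤ ‖f‖₂ ‖g‖₁` bounds the convolution of the first part with `1_n` by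
`(Σ_{N ≤ |k| < n} ρ(k)²)^{1/2} · 2n`, and `‖f ∗ g‖₂ ≤ ‖f‖₁ ‖g‖₂` bounds that of the second part
by `2N · √(2n)`, as `|ρ| ≤ 1`. Dividing by `n` gives the claim. All functions involved are
finitely supported, so Young's inequality is only needed there, where every sum is finite.
-/

open scoped BigOperators

noncomputable section

/-- Convolution of two functions on `ℤ`. -/
def zconv (f g : ℤ → ℝ) (k : ℤ) : ℝ := ∑' j : ℤ, f j * g (k - j)

/-- The `ℓ²(ℤ)` norm of a function on `ℤ`. -/
def l2normZ (f : ℤ → ℝ) : ℝ := Real.sqrt (∑' k : ℤ, f k ^ 2)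

open Finset
open scoped Pointwise

lemma Real.sqrt_sum_add_sq_le {ι : Type*} (s : Finset ι) (a b : ι → ℝ) :
    √(∑ i ∈ s, (a i + b i) ^ 2) ≤
      √(∑ i ∈ s, a i ^ 2) + √(∑ i ∈ s, b i ^ 2) := by
  have := norm_add_le (WithLp.toLp 2 (fun i : s => a i) : EuclideanSpace ℝ s)
    (WithLp.toLp 2 (fun i : s => b i))
  simpa [EuclideanSpace.norm_eq, ← WithLp.toLp_add, sum_attach s (fun i => (a i + b i) ^ 2),
    sum_attach s (fun i => a i ^ 2), sum_attach s (fun i => b i ^ 2)] using this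

section Indicator

variable {α M : Type*}

lemma Finset.indicator_eq_zero_of_notMem [Zero M] (s : Finset α) (a : α → M) :
    ∀ k ∉ s, (s : Set α).indicator a k = 0 :=
  fun _ hk => Set.indicator_of_notMem (mem_coe.not.mpr hk) a

lemma Finset.indicator_filter_add_indicator_filter_not [DecidableEq α] [AddMonoid M]
    (s : Finset α) (p : α → Prop) [DecidablePred p] (a : α → M) :
    ((s.filter p : Finset α) : Set α).indicator a
      + ((s.filter (¬p ·) : Finset α) : Set α).indicator a = (s : Set α).indicator a := by
  have h := Set.indicator_union_of_disjoint (disjoint_coe.mpr (disjoint_filter_filter_not s s p)) a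
  rw [← coe_union, filter_union_filter_not_eq] at h
  exact h.symm

lemma sum_abs_indicator_le_card {a : α → ℝ} (ha : ∀ k, |a k| ≤ 1) (s : Finset α) :
    ∑ k ∈ s, |(s : Set α).indicator a k| ≤ s.card := by
  simpa using sum_le_card_nsmul s (fun k => |(s : Set α).indicator a k|) 1 fun k hk => by
    rw [Set.indicator_of_mem (mem_coe.mpr hk)]
    exact ha k

end Indicator

section FinitelySupported

variable {f f₁ f₂ g h h₁ h₂ : ℤ → ℝ} {E E₁ E₂ D S S₁ S₂ : Finset ℤ}

lemma zconv_comm (f g : ℤ → ℝ) : zconv f g = zconv g f := by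
  ext k
  rw [zconv, zconv, ← (Equiv.subLeft k).tsum_eq]
  simp [mul_comm]

lemma zconv_eq_sum (hf : ∀ j ∉ E, f j = 0) (k : ℤ) :
    zconv f g k = ∑ j ∈ E, f j * g (k - j) :=
  tsum_eq_sum fun j hj => by rw [hf j hj, zero_mul]

lemma zconv_eq_zero_of_notMem_add (hf : ∀ j ∉ E, f j = 0) (hg : ∀ k ∉ D, g k = 0) :
    ∀ k ∉ E + D, zconv f g k = 0 := by
  intro k hk
  rw [zconv_eq_sum hf]
  refine sum_eq_zero fun j hj => ?_
  have : k - j ∉ D := fun hkj => hk (mem_add.mpr ⟨j, hj, k - j, hkj, add_sub_cancel j k⟩)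
  rw [hg _ this, mul_zero]

lemma zconv_add_left (hf₁ : ∀ j ∉ E₁, f₁ j = 0) (hf₂ : ∀ j ∉ E₂, f₂ j = 0) :
    zconv (f₁ + f₂) g = zconv f₁ g + zconv f₂ g := by
  ext k
  have summable {f : ℤ → ℝ} {E : Finset ℤ} (hf : ∀ j ∉ E, f j = 0) :
      Summable fun j => f j * g (k - j) :=
    summable_of_ne_finset_zero fun j hj => by rw [hf j hj, zero_mul]
  simp only [zconv, Pi.add_apply, add_mul]
  exact (summable hf₁).tsum_add (summable hf₂)

lemma l2normZ_eq_sqrt_sum (hh : ∀ k ∉ S, h k = 0) : l2normZ h = √(∑ k ∈ S, h k ^ 2) := by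
  rw [l2normZ, tsum_eq_sum fun k hk => by rw [hh k hk, zero_pow two_ne_zero]]

lemma l2normZ_add_le (hh₁ : ∀ k ∉ S₁, h₁ k = 0) (hh₂ : ∀ k ∉ S₂, h₂ k = 0) :
    l2normZ (h₁ + h₂) ≤ l2normZ h₁ + l2normZ h₂ := by
  have vanish {h : ℤ → ℝ} {S : Finset ℤ} (hh : ∀ k ∉ S, h k = 0)
      (hS : S ⊆ S₁ ∪ S₂) : ∀ k ∉ S₁ ∪ S₂, h k = 0 :=
    fun k hk => hh k fun hkS => hk (hS hkS)
  have hsum : ∀ k ∉ S₁ ∪ S₂, (h₁ + h₂) k = 0 := fun k hk => by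
    rw [Pi.add_apply, vanish hh₁ subset_union_left k hk, vanish hh₂ subset_union_right k hk,
      add_zero]
  rw [l2normZ_eq_sqrt_sum hsum, l2normZ_eq_sqrt_sum (vanish hh₁ subset_union_left),
    l2normZ_eq_sqrt_sum (vanish hh₂ subset_union_right)]
  exact Real.sqrt_sum_add_sq_le _ _ _

lemma sum_sq_comp_sub_le (hg : ∀ k ∉ D, g k = 0) (S : Finset ℤ) (j : ℤ) :
    ∑ k ∈ S, g (k - j) ^ 2 ≤ ∑ k ∈ D, g k ^ 2 := by
  have hsum : Summable fun k => g k ^ 2 :=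
    summable_of_ne_finset_zero fun k hk => by rw [hg k hk, zero_pow two_ne_zero]
  calc ∑ k ∈ S, g (k - j) ^ 2
      ≤ ∑' k, g (k - j) ^ 2 :=
        ((Equiv.subRight j).summable_iff.mpr hsum).sum_le_tsum S fun _ _ => sq_nonneg _
    _ = ∑' k, g k ^ 2 := (Equiv.subRight j).tsum_eq (fun k => g k ^ 2)
    _ = ∑ k ∈ D, g k ^ 2 := tsum_eq_sum fun k hk => by rw [hg k hk, zero_pow two_ne_zero]

lemma l2normZ_zconv_le_l1_mul_l2 (hf : ∀ j ∉ E, f j = 0) (hg : ∀ k ∉ D, g k = 0) :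
    l2normZ (zconv f g) ≤ (∑ j ∈ E, |f j|) * l2normZ g := by
  have pointwise (k : ℤ) :
      zconv f g k ^ 2 ≤ (∑ j ∈ E, |f j|) * ∑ j ∈ E, |f j| * g (k - j) ^ 2 := by
    -- Cauchy–Schwarz with the weights `|f j|`
    rw [zconv_eq_sum hf]
    exact sum_sq_le_sum_mul_sum_of_sq_le_mul E (fun j _ => abs_nonneg (f j))
      (fun j _ => mul_nonneg (abs_nonneg (f j)) (sq_nonneg (g (k - j))))
      fun j _ => by rw [← mul_assoc, ← sq, sq_abs, mul_pow]
  have hsq : ∑ k ∈ E + D, zconv f g k ^ 2 ≤ (∑ j ∈ E, |f j|) ^ 2 * ∑ k ∈ D, g k ^ 2 :=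
    calc ∑ k ∈ E + D, zconv f g k ^ 2
        ≤ ∑ k ∈ E + D, (∑ j ∈ E, |f j|) * ∑ j ∈ E, |f j| * g (k - j) ^ 2 :=
          sum_le_sum fun k _ => pointwise k
      _ = (∑ j ∈ E, |f j|) * ∑ j ∈ E, |f j| * ∑ k ∈ E + D, g (k - j) ^ 2 := by
          simp_rw [← mul_sum, mul_sum]
          rw [sum_comm]
      _ ≤ (∑ j ∈ E, |f j|) * ∑ j ∈ E, |f j| * ∑ k ∈ D, g k ^ 2 := by
          gcongr with j
          exact sum_sq_comp_sub_le hg _ j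
      _ = (∑ j ∈ E, |f j|) ^ 2 * ∑ k ∈ D, g k ^ 2 := by rw [← sum_mul]; ring
  rw [l2normZ_eq_sqrt_sum (zconv_eq_zero_of_notMem_add hf hg), l2normZ_eq_sqrt_sum hg]
  calc √(∑ k ∈ E + D, zconv f g k ^ 2)
      ≤ √((∑ j ∈ E, |f j|) ^ 2 * ∑ k ∈ D, g k ^ 2) := Real.sqrt_le_sqrt hsq
    _ = (∑ j ∈ E, |f j|) * √(∑ k ∈ D, g k ^ 2) := by
      rw [Real.sqrt_mul (sq_nonneg _), Real.sqrt_sq (sum_nonneg fun _ _ => abs_nonneg _)]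

lemma l2normZ_zconv_le_l2_mul_l1 (hf : ∀ j ∉ E, f j = 0) (hg : ∀ k ∉ D, g k = 0) :
    l2normZ (zconv f g) ≤ l2normZ f * ∑ k ∈ D, |g k| := by
  rw [zconv_comm, mul_comm]
  exact l2normZ_zconv_le_l1_mul_l2 hg hf

end FinitelySupported

lemma ite_abs_lt_eq_indicator {M : Type*} [Zero M] (n : ℕ) (a : ℤ → M) :
    (fun k => if |k| < (n : ℤ) then a k else 0) =
      ((Ioo (-(n : ℤ)) n : Finset ℤ) : Set ℤ).indicator a := by
  ext k
  simp [Set.indicator, abs_lt]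

lemma l2normZ_indicator (s : Finset ℤ) (a : ℤ → ℝ) :
    l2normZ ((s : Set ℤ).indicator a) = √(∑ k ∈ s, a k ^ 2) := by
  rw [l2normZ_eq_sqrt_sum (s.indicator_eq_zero_of_notMem a)]
  exact congrArg _ (sum_congr rfl fun k hk => by rw [Set.indicator_of_mem (mem_coe.mpr hk)])

lemma card_Ioo_neg_le (m : ℕ) : ((Ioo (-(m : ℤ)) m).card : ℝ) ≤ 2 * m := by
  have : ((Ioo (-(m : ℤ)) m).card : ℤ) ≤ 2 * m := by rw [Int.card_Ioo]; omega
  exact_mod_cast this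

lemma sum_abs_indicator_le_of_subset_Ioo {a : ℤ → ℝ} (ha : ∀ k, |a k| ≤ 1) {s : Finset ℤ}
    {m : ℕ} (hs : s ⊆ Ioo (-(m : ℤ)) m) : ∑ k ∈ s, |(s : Set ℤ).indicator a k| ≤ 2 * m :=
  (sum_abs_indicator_le_card ha s).trans
    ((Nat.cast_le.mpr (card_le_card hs)).trans (card_Ioo_neg_le m))

lemma filter_not_le_abs_subset_Ioo (s : Finset ℤ) (N : ℕ) :
    s.filter (fun k => ¬(N : ℤ) ≤ |k|) ⊆ Ioo (-(N : ℤ)) N := fun k hk => by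
  simpa [abs_lt] using (mem_filter.mp hk).2

lemma one_div_mul_add_le (n N : ℕ) {A : ℝ} (hA : 0 ≤ A) :
    1 / (n : ℝ) * (A * (2 * n) + 2 * N * √(2 * n)) ≤
      2 * A + 2 * (2 * (N : ℝ) + 1) * (n : ℝ) ^ (-(1 : ℝ) / 2) := by
  rcases n.eq_zero_or_pos with rfl | hn
  · simp only [CharP.cast_eq_zero, div_zero, zero_mul]
    positivity
  have hn' : (0 : ℝ) < n := Nat.cast_pos.mpr hn
  have h2 : √(2 : ℝ) ≤ 2 := by
    rw [Real.sqrt_le_left zero_le_two]; norm_num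
  rw [show (n : ℝ) ^ (-(1 : ℝ) / 2) = (√n)⁻¹ by
    rw [Real.sqrt_eq_rpow, ← Real.rpow_neg hn'.le]; norm_num, Real.sqrt_mul zero_le_two]
  have hsq : (n : ℝ) = √n ^ 2 := (Real.sq_sqrt hn'.le).symm
  have hs : 0 < √(n : ℝ) := Real.sqrt_pos.mpr hn'
  generalize √(n : ℝ) = s at hsq hs ⊢
  rw [hsq]
  field_simp
  linarith [mul_le_mul_of_nonneg_left h2 (Nat.cast_nonneg (α := ℝ) N)]

theorem conv_l2_truncation_bound_general (ρ : ℤ → ℝ) (hρ : ∀ k, |ρ k| ≤ 1)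
    (N n : ℕ) :
    (1 / (n : ℝ)) *
        l2normZ (zconv (fun k => if |k| < (n:ℤ) then |ρ k| else 0)
          (fun k => if |k| < (n:ℤ) then (1:ℝ) else 0)) ≤
      2 * Real.sqrt (∑ k ∈ (Finset.Ioo (-(n:ℤ)) (n:ℤ)).filter (fun k => (N:ℤ) ≤ |k|), ρ k ^ 2)
        + 2 * (2 * (N : ℝ) + 1) * (n : ℝ) ^ (-(1:ℝ)/2) := by
  set T := Ioo (-(n : ℤ)) n
  set high := T.filter fun k => (N : ℤ) ≤ |k|
  set low := T.filter fun k => ¬(N : ℤ) ≤ |k|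
  rw [ite_abs_lt_eq_indicator, ite_abs_lt_eq_indicator,
    ← T.indicator_filter_add_indicator_filter_not fun k => (N : ℤ) ≤ |k|]
  set ρhigh := (high : Set ℤ).indicator (|ρ ·|)
  set ρlow := (low : Set ℤ).indicator (|ρ ·|)
  set one := (T : Set ℤ).indicator fun _ => (1 : ℝ)
  have hhigh : ∀ k ∉ high, ρhigh k = 0 := high.indicator_eq_zero_of_notMem _
  have hlow : ∀ k ∉ low, ρlow k = 0 := low.indicator_eq_zero_of_notMem _
  have hone : ∀ k ∉ T, one k = 0 := T.indicator_eq_zero_of_notMem _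
  rw [zconv_add_left hhigh hlow]
  calc _ ≤ 1 / (n : ℝ) * (l2normZ (zconv ρhigh one) + l2normZ (zconv ρlow one)) := by
        gcongr
        exact l2normZ_add_le (zconv_eq_zero_of_notMem_add hhigh hone)
          (zconv_eq_zero_of_notMem_add hlow hone)
    _ ≤ 1 / (n : ℝ) *
          (l2normZ ρhigh * ∑ k ∈ T, |one k| + (∑ k ∈ low, |ρlow k|) * l2normZ one) := by
        gcongr
        · exact l2normZ_zconv_le_l2_mul_l1 hhigh hone
        · exact l2normZ_zconv_le_l1_mul_l2 hlow hone
    _ ≤ 1 / (n : ℝ) * (√(∑ k ∈ high, ρ k ^ 2) * (2 * n) + 2 * N * √(2 * n)) := by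
        simp only [ρhigh, one, l2normZ_indicator, sq_abs, one_pow, sum_const, nsmul_eq_mul, mul_one]
        gcongr
        · exact sum_abs_indicator_le_of_subset_Ioo (fun _ => abs_one.le) subset_rfl
        · exact sum_abs_indicator_le_of_subset_Ioo (fun k => (abs_abs (ρ k)).trans_le (hρ k))
            (filter_not_le_abs_subset_Ioo T N)
        · exact card_Ioo_neg_le n
    _ ≤ _ := one_div_mul_add_le n N (Real.sqrt_nonneg _)

/-- if `|ρ(k)| ≤ 1` for all `k` and `1 ≤ N ≤ n`, then, with
`ρ_n(k) = |ρ(k)|·1_{|k|<n}` and `1_n(k) = 1_{|k|<n}`,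
`(1/n)·‖ρ_n ∗ 1_n‖_{ℓ²} ≤ 2·(Σ_{N≤|k|<n} ρ(k)²)^{1/2} + 2·(2N+1)·n^{−1/2}`. -/
theorem conv_l2_truncation_bound (ρ : ℤ → ℝ) (hρ : ∀ k, |ρ k| ≤ 1)
    (N n : ℕ) (hN : 1 ≤ N) (hNn : N ≤ n) :
    (1 / (n : ℝ)) *
        l2normZ (zconv (fun k => if |k| < (n:ℤ) then |ρ k| else 0)
          (fun k => if |k| < (n:ℤ) then (1:ℝ) else 0)) ≤
      2 * Real.sqrt (∑ k ∈ (Finset.Ioo (-(n:ℤ)) (n:ℤ)).filter (fun k => (N:ℤ) ≤ |k|), ρ k ^ 2)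
        + 2 * (2 * (N : ℝ) + 1) * (n : ℝ) ^ (-(1:ℝ)/2) :=
  conv_l2_truncation_bound_general ρ hρ N n
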